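/- Let G = (V, E⁺, E⁰) be a fuzzy graph in which all real edges and nonedges have unit weight, and let k be a nonnegative integer. Define a fuzzy graph G' with unit weights on real edges and nonedges as follows: the vertex set is V together with a new vertex x_e for every real edge e ∈ E⁺; for every real edge e = {u,v} ∈ E⁺ of G, the pairs {u, x_e} and {v, x_e} are real edges of G'; the nonedges of G' are exactly the nonedges of G; all remaining vertex pairs of G' (including every former real edge {u,v} of G and all other pairs involving the new vertices) are fuzzy edges. Then G admits a clustering of cost at most k if and only if G' admits a clustering of cost at most k. -/

import Mathlib

/-!
Put every subdivision vertex `x_e` into the cluster of one endpoint `a` of `e = {a, b}`. Then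
`{a, x_e}` is never cut and `{b, x_e}` is cut exactly when `e` is, while nonedges are untouched,
so the cost does not increase. Conversely, restrict a clustering of `G'` to `V`: nonedges keep
their cost, and if the real edge `e = {u, v}` is cut then `x_e` is separated from `u` or from
`v`, giving a cut real edge of `G'` that determines `e`.
-/

open Finset

/-- A fuzzy graph: a finite vertex set with disjoint symmetric irreflexive sets of
'real' edges and 'fuzzy' edges; remaining pairs of distinct vertices are 'nonedges'. -/
structure FuzzyGraph (V : Type*) where
  real : V → V → Bool
  fuzzy : V → V → Bool
  real_symm : ∀ u v, real u v = real v u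
  fuzzy_symm : ∀ u v, fuzzy u v = fuzzy v u
  real_irrefl : ∀ v, real v v = false
  fuzzy_irrefl : ∀ v, fuzzy v v = false
  not_real_and_fuzzy : ∀ u v, ¬(real u v = true ∧ fuzzy u v = true)

namespace FuzzyGraph

variable {V : Type*}

/-- The pair `{u,v}` is a nonedge: distinct, neither a real nor a fuzzy edge. -/
def nonedge (G : FuzzyGraph V) (u v : V) : Prop :=
  u ≠ v ∧ ¬G.real u v ∧ ¬G.fuzzy u v

instance (G : FuzzyGraph V) [DecidableEq V] (u v : V) : Decidable (G.nonedge u v) :=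
  inferInstanceAs (Decidable (u ≠ v ∧ ¬G.real u v ∧ ¬G.fuzzy u v))

/-- The simple graph `G⁽⁺⁾` of real edges. -/
def plus (G : FuzzyGraph V) : SimpleGraph V where
  Adj u v := G.real u v
  symm := ⟨by intro u v h; rwa [G.real_symm] at h⟩
  loopless := ⟨by intro v h; rw [G.real_irrefl] at h; exact Bool.noConfusion h⟩

/-- The simple graph `G⁽⁰⁾` of fuzzy edges. -/
def zero (G : FuzzyGraph V) : SimpleGraph V where
  Adj u v := G.fuzzy u v
  symm := ⟨by intro u v h; rwa [G.fuzzy_symm] at h⟩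
  loopless := ⟨by intro v h; rw [G.fuzzy_irrefl] at h; exact Bool.noConfusion h⟩

variable [Fintype V] [DecidableEq V]

/-- The real neighborhood `N⁺(v)`. -/
def realNbrs (G : FuzzyGraph V) (v : V) : Finset V := univ.filter fun u => G.real v u

/-- The fuzzy neighborhood `N⁰(v)`. -/
def fuzzyNbrs (G : FuzzyGraph V) (v : V) : Finset V := univ.filter fun u => G.fuzzy v u

/-- The nonneighborhood `N⁻(v)`. -/
def nonNbrs (G : FuzzyGraph V) (v : V) : Finset V := univ.filter fun u => G.nonedge v u

/-- The closed real neighborhood `N⁺[v]`. -/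
def closedRealNbrs (G : FuzzyGraph V) (v : V) : Finset V := insert v (G.realNbrs v)

end FuzzyGraph

/-- `ω` is a valid weight function for `G`: symmetric nonnegative integer weights,
zero exactly on the fuzzy edges. -/
def IsWeight {V : Type*} [Fintype V] [DecidableEq V] (G : FuzzyGraph V) (ω : V → V → ℕ) : Prop :=
  (∀ u v, ω u v = ω v u) ∧ ∀ u v : V, u ≠ v → (ω u v = 0 ↔ G.fuzzy u v)

/-- The unit weight function: weight 1 on real edges and nonedges, 0 on fuzzy edges. -/
def unitW {V : Type*} (G : FuzzyGraph V) : V → V → ℕ := fun u v => if G.fuzzy u v then 0 else 1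

/-- Two vertices lie in a common cluster of the clustering `𝒞`. -/
def together {V : Type*} [Fintype V] [DecidableEq V] (𝒞 : Finpartition (univ : Finset V))
    (u v : V) : Prop :=
  ∃ C ∈ 𝒞.parts, u ∈ C ∧ v ∈ C

instance {V : Type*} [Fintype V] [DecidableEq V] (𝒞 : Finpartition (univ : Finset V)) (u v : V) :
    Decidable (together 𝒞 u v) :=
  inferInstanceAs (Decidable (∃ C ∈ 𝒞.parts, u ∈ C ∧ v ∈ C))

/-- The cost of a clustering: total weight of real edges between different clusters
plus total weight of nonedges inside clusters.  (Each unordered pair is counted twice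
in the sum over ordered pairs, whence the division by 2.) -/
def cost {V : Type*} [Fintype V] [DecidableEq V] (G : FuzzyGraph V) (ω : V → V → ℕ)
    (𝒞 : Finpartition (univ : Finset V)) : ℕ :=
  (∑ p ∈ univ.offDiag,
      ((if G.real p.1 p.2 ∧ ¬together 𝒞 p.1 p.2 then ω p.1 p.2 else 0) +
       (if G.nonedge p.1 p.2 ∧ together 𝒞 p.1 p.2 then ω p.1 p.2 else 0))) / 2

/-- A clique in `G⁽⁺⁾`: pairwise real-adjacent vertices. -/
def IsRealClique {V : Type*} (G : FuzzyGraph V) (K : Finset V) : Prop :=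
  ∀ u ∈ K, ∀ v ∈ K, u ≠ v → G.real u v

/-- A clique in `G⁽⁰⁾`: pairwise fuzzy-adjacent vertices. -/
def IsFuzzyClique {V : Type*} (G : FuzzyGraph V) (K : Finset V) : Prop :=
  ∀ u ∈ K, ∀ v ∈ K, u ≠ v → G.fuzzy u v

/-- A critical clique of `G⁽⁺⁾`: a clique with `⋂_{x ∈ K} N⁺[x] = ⋃_{x ∈ K} N⁺[x]`,
inclusion-wise maximal with this property. -/
def IsCriticalClique {V : Type*} [Fintype V] [DecidableEq V] (G : FuzzyGraph V)
    (K : Finset V) : Prop :=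
  IsRealClique G K ∧ K.inf (G.closedRealNbrs) = K.sup (G.closedRealNbrs) ∧
    ∀ K' : Finset V, K ⊆ K' → IsRealClique G K' →
      K'.inf (G.closedRealNbrs) = K'.sup (G.closedRealNbrs) → K' = K

/-- A simple graph is `c`-closed if every pair of distinct nonadjacent vertices has
fewer than `c` common neighbors. -/
def IsCClosed {V : Type*} (H : SimpleGraph V) (c : ℕ) : Prop :=
  ∀ u v : V, u ≠ v → ¬H.Adj u v → Set.ncard {w | H.Adj u w ∧ H.Adj v w} < c

/-- A fuzzy graph is fuzzy `c`-closed if its fuzzy edge graph `G⁽⁰⁾` is `c`-closed. -/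
def FuzzyCClosed {V : Type*} [Fintype V] [DecidableEq V] (G : FuzzyGraph V) (c : ℕ) : Prop :=
  ∀ u v : V, u ≠ v → ¬G.fuzzy u v → ((G.fuzzyNbrs u) ∩ (G.fuzzyNbrs v)).card < c

/-- The unordered pair `e` is a real edge of `G`. -/
def realEdgeP {V : Type*} (G : FuzzyGraph V) (e : Sym2 V) : Prop :=
  Sym2.lift ⟨G.real, G.real_symm⟩ e = true

instance {V : Type*} (G : FuzzyGraph V) : DecidablePred (realEdgeP G) :=
  fun e => inferInstanceAs (Decidable (_ = true))

section Clustering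

variable {V W : Type*} [Fintype V] [DecidableEq V]

lemma together_iff_mem_part (P : Finpartition (univ : Finset V)) (u v : V) :
    together P u v ↔ v ∈ P.part u :=
  ⟨fun ⟨_, hC, hu, hv⟩ => P.part_eq_of_mem hC hu ▸ hv,
    fun h => ⟨P.part u, P.part_mem.2 (mem_univ u), P.mem_part (mem_univ u), h⟩⟩

lemma together_refl (P : Finpartition (univ : Finset V)) (u : V) : together P u u :=
  (together_iff_mem_part P u u).2 (P.mem_part (mem_univ u))

lemma together_comm {P : Finpartition (univ : Finset V)} {u v : V} :
    together P u v ↔ together P v u :=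
  ⟨fun ⟨C, hC, hu, hv⟩ => ⟨C, hC, hv, hu⟩, fun ⟨C, hC, hv, hu⟩ => ⟨C, hC, hu, hv⟩⟩

lemma together_trans {P : Finpartition (univ : Finset V)} {u v w : V}
    (huv : together P u v) (hvw : together P v w) : together P u w := by
  obtain ⟨C, hC, hu, hv⟩ := huv
  obtain ⟨D, hD, hv', hw⟩ := hvw
  exact ⟨C, hC, hu, P.eq_of_mem_parts hC hD hv hv' ▸ hw⟩

def comapSetoid (P : Finpartition (univ : Finset V)) (f : W → V) : Setoid W :=
  ⟨fun a b => together P (f a) (f b),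
    ⟨fun a => together_refl P (f a), together_comm.1, together_trans⟩⟩

instance (P : Finpartition (univ : Finset V)) (f : W → V) : DecidableRel (comapSetoid P f) :=
  fun a b => inferInstanceAs (Decidable (together P (f a) (f b)))

variable [Fintype W] [DecidableEq W]

def Finpartition.comap (P : Finpartition (univ : Finset V)) (f : W → V) :
    Finpartition (univ : Finset W) :=
  Finpartition.ofSetoid (comapSetoid P f)

lemma together_comap (P : Finpartition (univ : Finset V)) (f : W → V) (a b : W) :
    together (P.comap f) a b ↔ together P (f a) (f b) := by
  rw [together_iff_mem_part]
  exact Finpartition.mem_part_ofSetoid_iff_rel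

end Clustering

section Cost

variable {V : Type*} [Fintype V] [DecidableEq V]

def cutRealEdges (G : FuzzyGraph V) (P : Finpartition (univ : Finset V)) : Finset (V × V) :=
  {p | G.real p.1 p.2 ∧ ¬together P p.1 p.2}

def joinedNonedges (G : FuzzyGraph V) (P : Finpartition (univ : Finset V)) : Finset (V × V) :=
  {p | G.nonedge p.1 p.2 ∧ together P p.1 p.2}

lemma cost_unitW (G : FuzzyGraph V) (P : Finpartition (univ : Finset V)) :
    cost G (unitW G) P = (#(cutRealEdges G P) + #(joinedNonedges G P)) / 2 := by
  have hreal : ∀ u v, G.real u v → unitW G u v = 1 := fun u v h => by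
    have : G.fuzzy u v ≠ true := fun hf => G.not_real_and_fuzzy u v ⟨h, hf⟩
    simp_all [unitW]
  have hnon : ∀ u v, G.nonedge u v → unitW G u v = 1 := fun u v h => by
    simp [unitW, h.2.2]
  unfold cost cutRealEdges joinedNonedges
  rw [card_filter, card_filter, ← sum_add_distrib]
  congr 1
  refine sum_subset (subset_univ _) ?_ |>.trans (sum_congr rfl fun p _ => ?_)
  · rintro ⟨u, v⟩ - huv
    obtain rfl : u = v := by simpa using huv
    simp [G.real_irrefl, FuzzyGraph.nonedge]
  · split_ifs <;> simp_all

end Cost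

section Subdivision

variable {V : Type*}

lemma realEdgeP_mk {G : FuzzyGraph V} {u v : V} (h : G.real u v) : realEdgeP G s(u, v) := h

def SubdividesRealEdges (G : FuzzyGraph V)
    (G' : FuzzyGraph (V ⊕ {e : Sym2 V // realEdgeP G e})) : Prop :=
  ∀ a b : V ⊕ {e : Sym2 V // realEdgeP G e}, G'.real a b ↔
    ∃ (u : V) (e : Sym2 V) (he : realEdgeP G e), u ∈ e ∧
      ((a = Sum.inl u ∧ b = Sum.inr ⟨e, he⟩) ∨ (b = Sum.inl u ∧ a = Sum.inr ⟨e, he⟩))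

def SharesNonedges (G : FuzzyGraph V)
    (G' : FuzzyGraph (V ⊕ {e : Sym2 V // realEdgeP G e})) : Prop :=
  ∀ a b : V ⊕ {e : Sym2 V // realEdgeP G e}, G'.nonedge a b ↔
    ∃ u v : V, G.nonedge u v ∧ a = Sum.inl u ∧ b = Sum.inl v

noncomputable def subdivisionRetraction (G : FuzzyGraph V) :
    V ⊕ {e : Sym2 V // realEdgeP G e} → V :=
  Sum.elim id fun e => e.1.out.1

variable [Fintype V] [DecidableEq V]
variable {G : FuzzyGraph V} {G' : FuzzyGraph (V ⊕ {e : Sym2 V // realEdgeP G e})}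

lemma card_joinedNonedges_eq (hnon : SharesNonedges G G') {P : Finpartition (univ : Finset V)}
    {C' : Finpartition (univ : Finset (V ⊕ {e : Sym2 V // realEdgeP G e}))}
    (hC' : ∀ u v, together C' (Sum.inl u) (Sum.inl v) ↔ together P u v) :
    #(joinedNonedges G' C') = #(joinedNonedges G P) := by
  refine (card_nbij (fun p => (Sum.inl p.1, Sum.inl p.2)) ?_ ?_ ?_).symm
  · rintro ⟨u, v⟩ huv
    simp_all [joinedNonedges, hnon _ _]
  · rintro ⟨u, v⟩ - ⟨u', v'⟩ - h
    simpa using h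
  · rintro ⟨a, b⟩ hab
    simp only [joinedNonedges, mem_coe, mem_filter, mem_univ, true_and, hnon _ _] at hab
    obtain ⟨⟨u, v, huv, rfl, rfl⟩, htog⟩ := hab
    exact ⟨(u, v), by simp_all [joinedNonedges], rfl⟩

lemma card_cutRealEdges_comap_subdivisionRetraction_le (hreal : SubdividesRealEdges G G')
    (P : Finpartition (univ : Finset V)) :
    #(cutRealEdges G' (P.comap (subdivisionRetraction G))) ≤ #(cutRealEdges G P) := by
  set r := subdivisionRetraction G
  -- a cut real edge of `G'` is recovered from its image under `r`
  let lift (e : {e : Sym2 V // realEdgeP G e}) (x : V) : V ⊕ {e : Sym2 V // realEdgeP G e} :=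
    if x = e.1.out.1 then Sum.inr e else Sum.inl x
  have key : ∀ p ∈ cutRealEdges G' (P.comap r), ¬together P (r p.1) (r p.2) ∧
      ∃ e : {e : Sym2 V // realEdgeP G e},
        e.1 = s(r p.1, r p.2) ∧ p.1 = lift e (r p.1) ∧ p.2 = lift e (r p.2) := by
    rintro ⟨a, b⟩ hab
    simp only [cutRealEdges, mem_filter, mem_univ, true_and, hreal _ _, together_comap] at hab
    obtain ⟨⟨u, e, he, hu, ⟨rfl, rfl⟩ | ⟨rfl, rfl⟩⟩, hsep⟩ := hab
    · have hne : u ≠ e.out.1 := fun h => hsep (h ▸ together_refl P u)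
      refine ⟨hsep, ⟨e, he⟩, (Sym2.mem_and_mem_iff hne).1 ⟨hu, e.out_fst_mem⟩, ?_, ?_⟩ <;>
        simp [lift, r, subdivisionRetraction, hne]
    · have hne : e.out.1 ≠ u := fun h => hsep (h ▸ together_refl P _)
      refine ⟨hsep, ⟨e, he⟩, (Sym2.mem_and_mem_iff hne).1 ⟨e.out_fst_mem, hu⟩, ?_, ?_⟩ <;>
        simp [lift, r, subdivisionRetraction, hne.symm]
  refine card_le_card_of_injOn (fun p => (r p.1, r p.2)) ?_ ?_
  · intro p hp
    obtain ⟨hsep, e, he, -⟩ := key p hp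
    have hreal : G.real (r p.1) (r p.2) := (he ▸ e.2 : realEdgeP G s(r p.1, r p.2))
    simp [cutRealEdges, hreal, hsep]
  · intro p hp q hq hpq
    obtain ⟨-, e, he, hp1, hp2⟩ := key p hp
    obtain ⟨-, e', he', hq1, hq2⟩ := key q hq
    simp only [Prod.mk.injEq] at hpq
    obtain rfl : e = e' := Subtype.ext (by rw [he, he', hpq.1, hpq.2])
    rw [Prod.ext_iff, hp1, hp2, hq1, hq2, hpq.1, hpq.2]
    exact ⟨rfl, rfl⟩

lemma card_cutRealEdges_comap_inl_le (hreal : SubdividesRealEdges G G')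
    (C' : Finpartition (univ : Finset (V ⊕ {e : Sym2 V // realEdgeP G e}))) :
    #(cutRealEdges G (C'.comap Sum.inl)) ≤ #(cutRealEdges G' C') := by
  let x (u v : V) : V ⊕ {e : Sym2 V // realEdgeP G e} :=
    if h : realEdgeP G s(u, v) then Sum.inr ⟨_, h⟩ else Sum.inl u
  have hx : ∀ {u v}, (h : G.real u v) → x u v = Sum.inr ⟨s(u, v), realEdgeP_mk h⟩ :=
    fun h => dif_pos (realEdgeP_mk h)
  -- `x u v` cannot be clustered with both `u` and `v`, which are separated
  refine card_le_card_of_injOn (fun p => if together C' (Sum.inl p.1) (x p.1 p.2)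
    then (x p.1 p.2, Sum.inl p.2) else (Sum.inl p.1, x p.1 p.2)) ?_ ?_
  · rintro ⟨u, v⟩ huv
    simp only [cutRealEdges, mem_coe, mem_filter, mem_univ, true_and,
      together_comap] at huv
    obtain ⟨hr, hsep⟩ := huv
    simp only [hx hr, cutRealEdges, mem_coe, mem_filter, mem_univ, true_and]
    split_ifs with hux
    · exact ⟨(hreal _ _).2 ⟨v, _, _, Sym2.mem_mk_right u v, Or.inr ⟨rfl, rfl⟩⟩,
        fun hxv => hsep (together_trans hux hxv)⟩
    · exact ⟨(hreal _ _).2 ⟨u, _, _, Sym2.mem_mk_left u v, Or.inl ⟨rfl, rfl⟩⟩, hux⟩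
  · rintro ⟨u, v⟩ huv ⟨u', v'⟩ huv' h
    simp only [cutRealEdges, mem_coe, mem_filter, mem_univ, true_and] at huv huv'
    simp only [hx huv.1, hx huv'.1] at h
    split_ifs at h <;>
      simp only [Prod.mk.injEq, Sum.inr.injEq, Sum.inl.injEq, Subtype.mk.injEq, reduceCtorEq,
        and_false] at h
    · obtain ⟨he, rfl⟩ := h
      rw [Sym2.congr_left.1 he]
    · obtain ⟨rfl, he⟩ := h
      rw [Sym2.congr_right.1 he]

end Subdivision

/-- Subdividing every real edge of a unit-weight fuzzy graph `G` (the former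
real edge and all further new pairs become fuzzy, the nonedges are unchanged) yields an
equivalent instance. -/
theorem stmt16 {V : Type*} [Fintype V] [DecidableEq V]
    (G : FuzzyGraph V) (k : ℕ)
    (G' : FuzzyGraph (V ⊕ {e : Sym2 V // realEdgeP G e}))
    (hreal : ∀ a b : V ⊕ {e : Sym2 V // realEdgeP G e}, G'.real a b ↔
      ∃ (u : V) (e : Sym2 V) (he : realEdgeP G e), u ∈ e ∧
        ((a = Sum.inl u ∧ b = Sum.inr ⟨e, he⟩) ∨ (b = Sum.inl u ∧ a = Sum.inr ⟨e, he⟩)))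
    (hnon : ∀ a b : V ⊕ {e : Sym2 V // realEdgeP G e}, G'.nonedge a b ↔
      ∃ u v : V, G.nonedge u v ∧ a = Sum.inl u ∧ b = Sum.inl v) :
    (∃ 𝒞 : Finpartition (Finset.univ : Finset V), cost G (unitW G) 𝒞 ≤ k) ↔
    (∃ 𝒞' : Finpartition (Finset.univ : Finset (V ⊕ {e : Sym2 V // realEdgeP G e})),
      cost G' (unitW G') 𝒞' ≤ k) := by
  constructor
  · rintro ⟨P, hP⟩
    refine ⟨P.comap (subdivisionRetraction G), le_trans ?_ hP⟩
    rw [cost_unitW, cost_unitW, card_joinedNonedges_eq hnon fun u v => together_comap _ _ _ _]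
    gcongr
    exact card_cutRealEdges_comap_subdivisionRetraction_le hreal P
  · rintro ⟨C', hC'⟩
    refine ⟨C'.comap Sum.inl, le_trans ?_ hC'⟩
    rw [cost_unitW, cost_unitW,
      card_joinedNonedges_eq hnon fun u v => (together_comap _ _ _ _).symm]
    gcongr
    exact card_cutRealEdges_comap_inl_le hreal C'
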